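/- arXiv:1309.6254 — 2 statements merged into one kernel-verified Lean document; each statement's English description precedes it below -/
import Mathlib

section
/- The function f : (0,1) → ℝ defined by f(β) = ((1−β²)/(2β))·log((1+β)/(1−β)) is strictly decreasing on (0,1); moreover f(β) tends to 1 as β → 0⁺ and f(β) tends to 0 as β → 1⁻. -/
/-!
With `L β = log ((1 + β) / (1 - β))`, the derivative of `f β = (1 - β²) / (2β) · L β` is
`1 / β - (1 + β²) / (2β²) · L β`, which is negative because `L β > 2β`, the leading term of the
power series `L β = 2 ∑ β^(2k+1) / (2k+1)`. Near `0`, `f β = (1 - β²) / 2 · L β / β → L'(0) / 2 = 1`.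
Near `1`, `f β = (1 + β) / (2β) · ((1 - β) log (1 + β) - (1 - β) log (1 - β)) → 0`, because
`x log x` is continuous at `0`.
-/

open Filter Set

open Topology Real

lemma hasDerivAt_log_one_add_div_one_sub {x : ℝ} (hx : x ∈ Ioo (-1) 1) :
    HasDerivAt (fun t => log ((1 + t) / (1 - t))) (2 / (1 - x ^ 2)) x := by
  obtain ⟨hx₀, hx₁⟩ := hx
  have hp : 1 + x ≠ 0 := by linarith
  have hm : 1 - x ≠ 0 := by linarith
  have hpm : 1 - x ^ 2 ≠ 0 := by nlinarith
  refine ((((hasDerivAt_id' x).const_add 1).fun_div ((hasDerivAt_id' x).const_sub 1) hm).log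
    (div_ne_zero hp hm)).congr_deriv ?_
  field_simp
  ring

lemma two_mul_lt_log_one_add_div_one_sub {x : ℝ} (hx : x ∈ Ioo 0 1) :
    2 * x < log ((1 + x) / (1 - x)) := by
  obtain ⟨hx₀, hx₁⟩ := hx
  have hseries := hasSum_log_sub_log_of_abs_lt_one (abs_lt.2 ⟨by linarith, hx₁⟩)
  have h := sum_le_hasSum (Finset.range 2) (fun k _ => by positivity) hseries
  rw [log_div (by linarith) (by linarith)]
  norm_num [Finset.sum_range_succ] at h
  nlinarith [pow_pos hx₀ 3]

lemma hasDerivAt_one_sub_sq_div_two_mul_mul_log {x : ℝ} (hx : x ∈ Ioo 0 1) :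
    HasDerivAt (fun β => (1 - β ^ 2) / (2 * β) * log ((1 + β) / (1 - β)))
      (1 / x - (1 + x ^ 2) / (2 * x ^ 2) * log ((1 + x) / (1 - x))) x := by
  obtain ⟨hx₀, hx₁⟩ := hx
  have hg := ((hasDerivAt_pow 2 x).const_sub 1).fun_div ((hasDerivAt_id' x).const_mul 2)
    (by positivity)
  refine (hg.mul (hasDerivAt_log_one_add_div_one_sub ⟨by linarith, hx₁⟩)).congr_deriv ?_
  have : 1 - x ^ 2 ≠ 0 := by nlinarith
  field_simp
  ring

lemma strictAntiOn_one_sub_sq_div_two_mul_mul_log :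
    StrictAntiOn (fun β : ℝ => (1 - β ^ 2) / (2 * β) * log ((1 + β) / (1 - β))) (Ioo 0 1) := by
  refine strictAntiOn_of_deriv_neg (convex_Ioo 0 1)
    (fun x hx => (hasDerivAt_one_sub_sq_div_two_mul_mul_log hx).continuousAt.continuousWithinAt)
    fun x hx => ?_
  rw [interior_Ioo] at hx
  rw [(hasDerivAt_one_sub_sq_div_two_mul_mul_log hx).deriv]
  have hlog := two_mul_lt_log_one_add_div_one_sub hx
  obtain ⟨hx₀, -⟩ := hx
  rw [sub_neg, div_mul_eq_mul_div, lt_div_iff₀ (by positivity)]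
  calc 1 / x * (2 * x ^ 2) = 2 * x := by field_simp
    _ < log ((1 + x) / (1 - x)) := hlog
    _ ≤ (1 + x ^ 2) * log ((1 + x) / (1 - x)) :=
      le_mul_of_one_le_left (by linarith) (by nlinarith)

lemma tendsto_one_sub_sq_div_two_mul_mul_log_nhdsGT_zero :
    Tendsto (fun β : ℝ => (1 - β ^ 2) / (2 * β) * log ((1 + β) / (1 - β))) (𝓝[>] 0) (𝓝 1) := by
  have hslope := (hasDerivAt_log_one_add_div_one_sub (x := 0) (by norm_num)).tendsto_slope_zero_right
  have hcoef : Tendsto (fun β : ℝ => (1 - β ^ 2) / 2) (𝓝[>] 0) (𝓝 (1 / 2)) := by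
    refine tendsto_nhdsWithin_of_tendsto_nhds ?_
    convert (by fun_prop : Continuous fun β : ℝ => (1 - β ^ 2) / 2).tendsto 0 using 2
    norm_num
  convert hcoef.mul hslope using 1
  · ext β
    simp only [zero_add, add_zero, sub_zero, div_one, log_one, smul_eq_mul]
    ring
  · norm_num

lemma tendsto_one_sub_sq_div_two_mul_mul_log_nhdsLT_one :
    Tendsto (fun β : ℝ => (1 - β ^ 2) / (2 * β) * log ((1 + β) / (1 - β))) (𝓝[<] 1) (𝓝 0) := by
  set g := fun β : ℝ => (1 + β) / (2 * β) * ((1 - β) * log (1 + β) - (1 - β) * log (1 - β))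
  have hmul_log : ContinuousAt (fun β : ℝ => (1 - β) * log (1 - β)) 1 :=
    (continuous_sub_left 1).mul_log.continuousAt
  have hg : ContinuousAt g 1 :=
    .mul (by fun_prop (disch := norm_num)) (.sub (by fun_prop (disch := norm_num)) hmul_log)
  have hg1 : g 1 = 0 := by norm_num [g]
  refine hg1 ▸ (hg.tendsto.mono_left nhdsWithin_le_nhds).congr' ?_
  filter_upwards [Ioo_mem_nhdsLT one_pos] with β ⟨hβ₀, hβ₁⟩
  simp only [g]
  rw [log_div (by linarith) (by linarith)]
  field_simp
  ring

/-- The function f(β) = ((1−β²)/(2β))·log((1+β)/(1−β)) is strictly decreasing on (0,1),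
    tends to 1 as β → 0⁺, and tends to 0 as β → 1⁻. -/
theorem f_strictAnti_and_limits :
    StrictAntiOn (fun β : ℝ => ((1 - β^2) / (2*β)) * Real.log ((1 + β) / (1 - β)))
      (Set.Ioo 0 1) ∧
    Tendsto (fun β : ℝ => ((1 - β^2) / (2*β)) * Real.log ((1 + β) / (1 - β)))
      (nhdsWithin 0 (Set.Ioi 0)) (nhds 1) ∧
    Tendsto (fun β : ℝ => ((1 - β^2) / (2*β)) * Real.log ((1 + β) / (1 - β)))
      (nhdsWithin 1 (Set.Iio 1)) (nhds 0) :=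
  ⟨strictAntiOn_one_sub_sq_div_two_mul_mul_log,
    tendsto_one_sub_sq_div_two_mul_mul_log_nhdsGT_zero,
    tendsto_one_sub_sq_div_two_mul_mul_log_nhdsLT_one⟩
end

section
/- For every β ∈ (0,1), the function μ : (0,1) → ℝ defined by μ(β) = β/((1−β²)·Z_β), where Z_β = (1/2)·log((1+β)/(1−β)), is strictly increasing on (0,1) and maps (0,1) bijectively onto (1,∞); in particular, for every t > 1 there is a unique β ∈ (0,1) with μ(β) = t. -/
open Set

private lemma sinh_lt_mul_cosh {u : ℝ} (hu : 0 < u) : Real.sinh u < u * Real.cosh u := by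
  have h : StrictMonoOn (fun x : ℝ => x * Real.cosh x - Real.sinh x) (Set.Ici 0) := by
    apply strictMonoOn_of_deriv_pos (convex_Ici 0)
    · exact ((continuous_id.mul Real.continuous_cosh).sub Real.continuous_sinh).continuousOn
    · intro x hx
      rw [interior_Ici] at hx
      have hd : HasDerivAt (fun x : ℝ => x * Real.cosh x - Real.sinh x)
          (1 * Real.cosh x + x * Real.sinh x - Real.cosh x) x :=
        ((hasDerivAt_id x).mul (Real.hasDerivAt_cosh x)).sub (Real.hasDerivAt_sinh x)
      rw [hd.deriv]
      have h1 : 0 < Real.sinh x := Real.sinh_pos_iff.2 hx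
      nlinarith [mul_pos hx h1]
  have := h (Set.self_mem_Ici) (Set.mem_Ici.2 hu.le) hu
  simp only [Real.sinh_zero, Real.cosh_zero] at this
  nlinarith

/-- sinh u / u is strictly increasing on (0, ∞). -/
private lemma H_strictMono : StrictMonoOn (fun u : ℝ => Real.sinh u / u) (Set.Ioi 0) := by
  apply strictMonoOn_of_deriv_pos (convex_Ioi 0)
  · exact Real.continuous_sinh.continuousOn.div continuousOn_id
      (fun x hx => ne_of_gt hx)
  · intro x hx
    rw [interior_Ioi] at hx
    have hd : HasDerivAt (fun u : ℝ => Real.sinh u / u)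
        ((Real.cosh x * x - Real.sinh x * 1) / x ^ 2) x :=
      (Real.hasDerivAt_sinh x).div (hasDerivAt_id x) hx.ne'
    rw [hd.deriv]
    have := sinh_lt_mul_cosh hx
    have hx2 : (0:ℝ) < x ^ 2 := pow_pos hx 2
    apply div_pos (by nlinarith) hx2

private lemma H_gt_one {u : ℝ} (hu : 0 < u) : 1 < Real.sinh u / u :=
  (one_lt_div hu).2 (Real.self_lt_sinh_iff.2 hu)

/-- For each t > 1 there is u > 0 with sinh u / u = t. -/
private lemma H_surj {t : ℝ} (ht : 1 < t) : ∃ u : ℝ, 0 < u ∧ Real.sinh u / u = t := by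
  -- small point with value < t
  have hslope : Filter.Tendsto (fun u : ℝ => Real.sinh u / u) (nhdsWithin 0 (Set.Ioi 0))
      (nhds 1) := by
    have h := (Real.hasDerivAt_sinh 0).tendsto_slope_zero_right
    simp only [Real.sinh_zero, Real.cosh_zero] at h
    exact h.congr (fun u => by rw [zero_add, sub_zero, smul_eq_mul, inv_mul_eq_div])
  have hev : ∀ᶠ u in nhdsWithin (0:ℝ) (Set.Ioi 0),
      Real.sinh u / u < t ∧ 0 < u := by
    filter_upwards [hslope.eventually_lt_const ht, self_mem_nhdsWithin] with u h1 h2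
    exact ⟨h1, h2⟩
  obtain ⟨a, hat, ha0⟩ := hev.exists
  -- big point with value > t
  have hbig : ∀ᶠ b in Filter.atTop,
      Real.exp b / b ^ 1 > 2 * t + 2 ∧ (1:ℝ) ≤ b ∧ a < b := by
    filter_upwards [(Real.tendsto_exp_div_pow_atTop 1).eventually_gt_atTop (2 * t + 2),
      Filter.eventually_ge_atTop (1:ℝ), Filter.eventually_gt_atTop a] with b h1 h2 h3
    exact ⟨h1, h2, h3⟩
  obtain ⟨b, hbexp, hb1, hab⟩ := hbig.exists
  have hb0 : (0:ℝ) < b := lt_of_lt_of_le one_pos hb1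
  have hbt : t < Real.sinh b / b := by
    have hexpneg : Real.exp (-b) ≤ 1 := Real.exp_le_one_iff.2 (by linarith)
    have hsb : (Real.exp b - 1) / 2 ≤ Real.sinh b := by
      rw [Real.sinh_eq]; linarith
    rw [pow_one] at hbexp
    have h1b : 1 / b ≤ 1 := by
      rw [div_le_one hb0]; exact hb1
    have : 2 * t + 2 < Real.exp b / b := hbexp
    have hkey : t + 1/2 ≤ Real.sinh b / b := by
      have : (Real.exp b - 1) / (2 * b) ≤ Real.sinh b / b := by
        rw [div_le_div_iff₀ (by positivity) hb0]
        nlinarith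
      have h2 : t + 1/2 ≤ (Real.exp b - 1) / (2 * b) := by
        rw [le_div_iff₀ (by positivity)]
        have := (lt_div_iff₀ hb0).1 hbexp
        nlinarith
      linarith
    linarith
  -- IVT
  have hc : ContinuousOn (fun u : ℝ => Real.sinh u / u) (Set.Icc a b) := by
    apply Real.continuous_sinh.continuousOn.div continuousOn_id
    intro x hx; exact ne_of_gt (lt_of_lt_of_le ha0 hx.1)
  have := intermediate_value_Ioo hab.le hc
  have htmem : t ∈ Set.Ioo (Real.sinh a / a) (Real.sinh b / b) := ⟨hat, hbt⟩
  obtain ⟨u, hu, hut⟩ := this htmem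
  exact ⟨u, lt_trans ha0 hu.1, hut⟩

/-- Key identity: μ(β) = sinh(ℓβ)/ℓβ where ℓβ = log((1+β)/(1-β)). -/
private lemma mu_eq {β : ℝ} (hβ : β ∈ Set.Ioo (0:ℝ) 1) :
    β / ((1 - β^2) * ((1/2) * Real.log ((1 + β) / (1 - β))))
      = Real.sinh (Real.log ((1 + β) / (1 - β))) / Real.log ((1 + β) / (1 - β)) := by
  obtain ⟨h0, h1⟩ := hβ
  have hb1 : 0 < 1 - β := by linarith
  have hb2 : 0 < 1 + β := by linarith
  set r : ℝ := (1 + β) / (1 - β) with hr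
  have hrpos : 0 < r := div_pos hb2 hb1
  have hr1 : 1 < r := (one_lt_div hb1).2 (by linarith)
  have hlog : 0 < Real.log r := Real.log_pos hr1
  have hβ2 : (0:ℝ) < 1 - β^2 := by nlinarith
  have hsinh : Real.sinh (Real.log r) = 2 * β / (1 - β^2) := by
    rw [Real.sinh_eq, Real.exp_log hrpos, Real.exp_neg, Real.exp_log hrpos, hr, inv_div]
    field_simp [hb1.ne', hb2.ne', hβ2.ne']
    ring
  rw [hsinh]
  field_simp [hβ2.ne', hlog.ne']

private lemma ell_mem {β : ℝ} (hβ : β ∈ Set.Ioo (0:ℝ) 1) :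
    0 < Real.log ((1 + β) / (1 - β)) := by
  obtain ⟨h0, h1⟩ := hβ
  exact Real.log_pos ((one_lt_div (by linarith)).2 (by linarith))

private lemma ell_strictMono : StrictMonoOn (fun β : ℝ => Real.log ((1 + β) / (1 - β)))
    (Set.Ioo 0 1) := by
  intro x hx y hy hxy
  apply Real.log_lt_log (div_pos (by linarith [hx.1]) (by linarith [hx.2]))
  rw [div_lt_div_iff₀ (by linarith [hx.2]) (by linarith [hy.2])]
  nlinarith [hx.1, hy.2]

private lemma ell_surj {u : ℝ} (hu : 0 < u) :
    ∃ β ∈ Set.Ioo (0:ℝ) 1, Real.log ((1 + β) / (1 - β)) = u := by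
  refine ⟨(Real.exp u - 1) / (Real.exp u + 1), ⟨?_, ?_⟩, ?_⟩
  · have h1 : 1 < Real.exp u := by nlinarith [Real.add_one_le_exp u]
    have : 0 < Real.exp u - 1 := by linarith
    positivity
  · rw [div_lt_one (by positivity)]; linarith
  · have hd : (0:ℝ) < Real.exp u + 1 := by positivity
    have h1 : 1 + (Real.exp u - 1) / (Real.exp u + 1) = 2 * Real.exp u / (Real.exp u + 1) := by
      field_simp; ring
    have h2 : 1 - (Real.exp u - 1) / (Real.exp u + 1) = 2 / (Real.exp u + 1) := by
      field_simp [hd.ne']; norm_num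
    have h3 : 2 * Real.exp u / (Real.exp u + 1) / (2 / (Real.exp u + 1)) = Real.exp u := by
      field_simp
    rw [h1, h2, h3, Real.log_exp]

/-- The mean μ(β) = β/((1−β²)·Z_β), with Z_β = (1/2)·log((1+β)/(1−β)), is strictly
    increasing on (0,1) and maps (0,1) bijectively onto (1,∞); in particular for every
    t > 1 there is a unique β ∈ (0,1) with μ(β) = t. -/
theorem mu_strictMono_bijective :
    StrictMonoOn
      (fun β : ℝ => β / ((1 - β^2) * ((1/2) * Real.log ((1 + β) / (1 - β)))))
      (Set.Ioo 0 1) ∧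
    Set.BijOn
      (fun β : ℝ => β / ((1 - β^2) * ((1/2) * Real.log ((1 + β) / (1 - β)))))
      (Set.Ioo 0 1) (Set.Ioi 1) ∧
    ∀ t : ℝ, 1 < t → ∃! β : ℝ, β ∈ Set.Ioo (0 : ℝ) 1 ∧
      β / ((1 - β^2) * ((1/2) * Real.log ((1 + β) / (1 - β)))) = t := by
  set F := fun β : ℝ => β / ((1 - β^2) * ((1/2) * Real.log ((1 + β) / (1 - β)))) with hF
  have hmono : StrictMonoOn F (Set.Ioo 0 1) := by
    intro x hx y hy hxy
    rw [hF]
    simp only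
    rw [mu_eq hx, mu_eq hy]
    exact H_strictMono (Set.mem_Ioi.2 (ell_mem hx)) (Set.mem_Ioi.2 (ell_mem hy))
      (ell_strictMono hx hy hxy)
  have hmaps : Set.MapsTo F (Set.Ioo 0 1) (Set.Ioi 1) := by
    intro x hx
    rw [Set.mem_Ioi, hF]
    simp only
    rw [mu_eq hx]
    exact H_gt_one (ell_mem hx)
  have hsurj : Set.SurjOn F (Set.Ioo 0 1) (Set.Ioi 1) := by
    intro t ht
    rw [Set.mem_Ioi] at ht
    obtain ⟨u, hu0, hut⟩ := H_surj ht
    obtain ⟨β, hβ, hβu⟩ := ell_surj hu0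
    refine ⟨β, hβ, ?_⟩
    rw [hF]; simp only
    rw [mu_eq hβ, hβu, hut]
  have hbij : Set.BijOn F (Set.Ioo 0 1) (Set.Ioi 1) :=
    ⟨hmaps, hmono.injOn, hsurj⟩
  refine ⟨hmono, hbij, fun t ht => ?_⟩
  obtain ⟨β, hβ, hβt⟩ := hsurj (Set.mem_Ioi.2 ht)
  refine ⟨β, ⟨hβ, hβt⟩, fun γ ⟨hγ, hγt⟩ => ?_⟩
  have hγF : F γ = t := hγt
  exact hmono.injOn hγ hβ (hγF.trans hβt.symm)
end
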